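/- Let S = {(x, y, |x/y|) : -1 < x < 1, |x| < y < 1} ⊆ ℝ³. Then the frontier of S contains the set S_B = {(x, |x|, 1) : -1 < x < 1, x ≠ 0} ∪ {(0, 0, z) : 0 ≤ z ≤ 1}, and the projection of fr(S) ∩ ({0} × {0} × ℝ) to the z-axis is the interval [0,1]. -/

import Mathlib

open Filter Topology

private def Sset : Set (ℝ × ℝ × ℝ) :=
  {q | -1 < q.1 ∧ q.1 < 1 ∧ |q.1| < q.2.1 ∧ q.2.1 < 1 ∧ q.2.2 = |q.1 / q.2.1|}

private noncomputable def tn (n : ℕ) : ℝ := 1 / (n + 2)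

private lemma tseq : Tendsto tn atTop (𝓝 0) := by
  have := Filter.Tendsto.comp tendsto_inv_atTop_zero
    (Filter.tendsto_atTop_add_const_right atTop (2 : ℝ) tendsto_natCast_atTop_atTop)
  unfold tn
  simpa [Function.comp_def, one_div] using this

private lemma tpos (n : ℕ) : 0 < tn n := by unfold tn; positivity

private lemma thalf (n : ℕ) : tn n ≤ 1/2 := by
  unfold tn
  rw [div_le_div_iff₀ (by positivity) (by norm_num)]
  have : (0:ℝ) ≤ (n:ℝ) := Nat.cast_nonneg n
  linarith

private lemma mem1 (x : ℝ) (hx1 : -1 < x) (hx2 : x < 1) (hx0 : x ≠ 0) :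
    (x, |x|, (1:ℝ)) ∈ closure Sset := by
  set y : ℕ → ℝ := fun n => |x| + (1 - |x|) * tn n with hy
  have hxpos : 0 < |x| := abs_pos.mpr hx0
  have hxlt : |x| < 1 := abs_lt.mpr ⟨hx1, hx2⟩
  have hylb : ∀ n, |x| < y n := fun n => by
    have h2 := tpos n
    show |x| < |x| + (1 - |x|) * tn n
    nlinarith
  have hyub : ∀ n, y n < 1 := fun n => by
    have h1 := thalf n; have h2 := tpos n
    show |x| + (1 - |x|) * tn n < 1
    nlinarith
  have hyt : Tendsto y atTop (𝓝 |x|) := by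
    have h : Tendsto (fun n : ℕ => (1 - |x|) * tn n) atTop (𝓝 ((1 - |x|) * 0)) :=
      tendsto_const_nhds.mul tseq
    have h2 : Tendsto y atTop (𝓝 (|x| + (1 - |x|) * 0)) := tendsto_const_nhds.add h
    simpa using h2
  have hzt : Tendsto (fun n => |x| / y n) atTop (𝓝 1) := by
    have h : Tendsto (fun n => |x| / y n) atTop (𝓝 (|x| / |x|)) :=
      tendsto_const_nhds.div hyt (ne_of_gt hxpos)
    simpa [div_self (ne_of_gt hxpos)] using h
  refine mem_closure_of_tendsto
    ((tendsto_const_nhds.prodMk_nhds (hyt.prodMk_nhds hzt)) :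
      Tendsto (fun n => (x, y n, |x| / y n)) atTop (𝓝 (x, |x|, 1)))
    (Filter.Eventually.of_forall fun n => ?_)
  have hypos : 0 < y n := lt_of_le_of_lt (abs_nonneg x) (hylb n)
  refine ⟨hx1, hx2, hylb n, hyub n, ?_⟩
  show |x| / y n = |x / y n|
  rw [abs_div, abs_of_pos hypos]

private lemma mem2 (z : ℝ) (h0 : 0 ≤ z) (h1 : z ≤ 1) :
    ((0:ℝ), (0:ℝ), z) ∈ closure Sset := by
  have hxt : Tendsto (fun n => z * tn n * (1 - tn n)) atTop (𝓝 0) := by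
    have h : Tendsto (fun n => z * tn n * (1 - tn n)) atTop (𝓝 ((z * 0) * (1 - 0))) :=
      ((tendsto_const_nhds.mul tseq).mul (tendsto_const_nhds.sub tseq))
    simpa using h
  have hzt : Tendsto (fun n => z * (1 - tn n)) atTop (𝓝 z) := by
    have h : Tendsto (fun n => z * (1 - tn n)) atTop (𝓝 (z * (1 - 0))) :=
      tendsto_const_nhds.mul (tendsto_const_nhds.sub tseq)
    simpa using h
  refine mem_closure_of_tendsto
    ((hxt.prodMk_nhds (tseq.prodMk_nhds hzt)) :
      Tendsto (fun n => (z * tn n * (1 - tn n), tn n, z * (1 - tn n))) atTop (𝓝 (0, 0, z)))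
    (Filter.Eventually.of_forall fun n => ?_)
  have htp : 0 < tn n := tpos n
  have hth : tn n ≤ 1/2 := thalf n
  have h1t : 0 ≤ 1 - tn n := by linarith
  have key : 0 ≤ (1 - z) * tn n * (1 - tn n) :=
    mul_nonneg (mul_nonneg (by linarith) htp.le) h1t
  have hxnn : 0 ≤ z * tn n * (1 - tn n) := mul_nonneg (mul_nonneg h0 htp.le) h1t
  refine ⟨?_, ?_, ?_, ?_, ?_⟩
  · show -1 < z * tn n * (1 - tn n); nlinarith
  · show z * tn n * (1 - tn n) < 1; nlinarith [sq_nonneg (tn n)]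
  · show |z * tn n * (1 - tn n)| < tn n
    rw [abs_of_nonneg hxnn]; nlinarith [mul_pos htp htp]
  · show tn n < 1; linarith
  · show z * (1 - tn n) = |z * tn n * (1 - tn n) / tn n|
    rw [abs_of_nonneg (by positivity : (0:ℝ) ≤ z * tn n * (1 - tn n) / tn n)]
    field_simp

private lemma notmem1 (x : ℝ) : (x, |x|, (1:ℝ)) ∉ Sset := fun h => lt_irrefl _ h.2.2.1

private lemma notmem2 (z : ℝ) : ((0:ℝ), (0:ℝ), z) ∉ Sset := fun h => by
  have := h.2.2.1; simp at this

private lemma clsub : closure Sset ⊆ {q : ℝ × ℝ × ℝ | 0 ≤ q.2.2 ∧ q.2.2 ≤ 1} := by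
  apply closure_minimal
  · rintro ⟨x, y, z⟩ ⟨-, -, h3, -, h5⟩
    have hy : 0 < y := lt_of_le_of_lt (abs_nonneg x) h3
    constructor
    · rw [h5]; exact abs_nonneg _
    · rw [h5, abs_div, abs_of_pos hy]
      exact le_of_lt ((div_lt_one hy).mpr h3)
  · exact (isClosed_Icc.preimage (continuous_snd.snd) :
      IsClosed {q : ℝ × ℝ × ℝ | q.2.2 ∈ Set.Icc 0 1})

/-- the frontier of S = graph of |x/y| over
{(x,y) : -1 < x < 1, |x| < y < 1} contains the set S_B, and the fiber of
fr(S) over the origin is exactly the segment [0,1]. -/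
theorem stmt_17
    (S : Set (ℝ × ℝ × ℝ))
    (hS : S = {q | -1 < q.1 ∧ q.1 < 1 ∧ |q.1| < q.2.1 ∧ q.2.1 < 1 ∧
      q.2.2 = |q.1 / q.2.1|})
    (SB : Set (ℝ × ℝ × ℝ))
    (hSB : SB = {q | -1 < q.1 ∧ q.1 < 1 ∧ q.1 ≠ 0 ∧ q.2.1 = |q.1| ∧ q.2.2 = 1} ∪
      {q | q.1 = 0 ∧ q.2.1 = 0 ∧ 0 ≤ q.2.2 ∧ q.2.2 ≤ 1}) :
    SB ⊆ closure S \ S ∧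
    {z : ℝ | ((0 : ℝ), (0 : ℝ), z) ∈ closure S \ S} = Set.Icc 0 1 := by
  have hS' : S = Sset := hS
  subst hS'
  constructor
  · rw [hSB]
    rintro ⟨x, y, z⟩ (⟨hx1, hx2, hx0, hy, hz⟩ | ⟨hx, hy, hz0, hz1⟩)
    · simp only at hy hz hx1 hx2 hx0
      subst hy hz
      exact ⟨mem1 x hx1 hx2 hx0, notmem1 x⟩
    · simp only at hx hy hz0 hz1
      subst hx hy
      exact ⟨mem2 z hz0 hz1, notmem2 z⟩
  · ext z
    simp only [Set.mem_setOf_eq, Set.mem_Icc, Set.mem_diff]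
    constructor
    · rintro ⟨hcl, -⟩
      exact clsub hcl
    · rintro ⟨h0, h1⟩
      exact ⟨mem2 z h0 h1, notmem2 z⟩
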